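/- arXiv:2204.01665 — 4 statements merged into one kernel-verified Lean document; each statement's English description precedes it below -/
import Mathlib

section
/- Let S be a subset of F_2^n, δ ∈ (0,1), and t a natural number with 2^t ≥ |S|(|S|-1)/(2δ). Then at least a (1-δ)-fraction of all surjective linear maps L : F_2^n → F_2^t map S injectively into F_2^t. -/
/-!
For `x ≠ y` pick a functional `φ` with `φ (x - y) = 1`. Then `(w, L) ↦ L + φ(·) • w` injects
`W × {L surjective | L x = L y}` into the surjective maps, so surjective linear maps form a
universal hash family: a collision `L x = L y` has probability at most `1 / |W| = 2⁻ᵗ`.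
A map that is not injective on `S` has at least two colliding ordered pairs in `S`, so double
counting over the `|S| (|S| - 1)` ordered pairs bounds the fraction of such maps by
`|S| (|S| - 1) / (2 · 2ᵗ) ≤ δ`.
-/

open Finset Function

instance LinearMap.finite_of_finite {R M N : Type*} [Semiring R] [AddCommMonoid M] [Module R M]
    [AddCommMonoid N] [Module R N] [Finite M] [Finite N] : Finite (M →ₗ[R] N) :=
  Finite.of_injective _ DFunLike.coe_injective

theorem card_mul_card_surjective_apply_eq_le {K V W : Type*} [Field K] [AddCommGroup V]
    [Module K V] [AddCommGroup W] [Module K W] [Finite V] [Finite W] {x y : V} (hxy : x ≠ y) :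
    Nat.card W * Nat.card {L : V →ₗ[K] W // Surjective L ∧ L x = L y} ≤
      Nat.card {L : V →ₗ[K] W // Surjective L} := by
  set z := x - y
  obtain ⟨φ, hφz⟩ : ∃ φ : Module.Dual K V, φ z = 1 :=
    Module.Projective.exists_dual_eq_one K (sub_ne_zero.mpr hxy)
  have hLz {L : V →ₗ[K] W} (h : L x = L y) : L z = 0 := by rw [map_sub, h, sub_self]
  -- It agrees with `L` on `ker φ`, and `L (ker φ) = L V` since `V = ker φ + K z` and `L z = 0`.
  have hsurj (w : W) (L : {L : V →ₗ[K] W // Surjective L ∧ L x = L y}) :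
      Surjective (L.1 + φ.smulRight w) := by
    intro u
    obtain ⟨v, rfl⟩ := L.2.1 u
    refine ⟨v - φ v • z, ?_⟩
    simp [hLz L.2.2, hφz]
  rw [← Nat.card_prod]
  refine Nat.card_le_card_of_injective (fun p => ⟨p.2.1 + φ.smulRight p.1, hsurj p.1 p.2⟩) ?_
  rintro ⟨w, L, hL⟩ ⟨w', L', hL'⟩ h
  have h := congrArg Subtype.val h
  have hw : w = w' := by
    simpa [hLz hL.2, hLz hL'.2, hφz] using LinearMap.congr_fun h z
  subst hw
  simpa using h

theorem two_le_card_collisions_of_not_injOn {α β : Type*} [DecidableEq α] [DecidableEq β]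
    {g : α → β} {S : Finset α} (hg : ¬ Set.InjOn g S) :
    2 ≤ #{p ∈ S.offDiag | g p.1 = g p.2} := by
  obtain ⟨x, hx, y, hy, hgxy, hxy⟩ : ∃ x ∈ S, ∃ y ∈ S, g x = g y ∧ x ≠ y := by
    simpa [Set.InjOn] using hg
  refine one_lt_card.mpr ⟨(x, y), ?_, (y, x), ?_, by simp [hxy]⟩ <;>
    simp [hx, hy, hxy, hxy.symm, hgxy]

theorem birthday_bound {ι α β : Type*} [DecidableEq β] (H : Finset ι) (f : ι → α → β)
    (S : Finset α) [DecidablePred fun i => Set.InjOn (f i) S] {m δ : ℝ}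
    (hm : 0 < m) (hcoll : ∀ x ∈ S, ∀ y ∈ S, x ≠ y → m * #{i ∈ H | f i x = f i y} ≤ #H)
    (hδ : 0 < δ) (hS : #S * (#S - 1) / (2 * δ) ≤ m) :
    (1 - δ) * #H ≤ #{i ∈ H | Set.InjOn (f i) S} := by
  classical
  set bad := {i ∈ H | ¬ Set.InjOn (f i) S}
  have hcount : (#bad : ℝ) * 2 ≤ #S.offDiag * (#H / m) := by
    simpa using card_nsmul_le_card_nsmul (R := ℝ) (fun (i : ι) (p : α × α) => f i p.1 = f i p.2)
      (s := bad) (t := S.offDiag)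
      (fun i hi => by
        exact_mod_cast two_le_card_collisions_of_not_injOn (mem_filter.mp hi).2)
      (fun p hp => by
        obtain ⟨hx, hy, hxy⟩ := mem_offDiag.mp hp
        rw [le_div_iff₀' hm]
        refine le_trans ?_ (hcoll _ hx _ hy hxy)
        gcongr
        exact monotone_filter_left _ (filter_subset _ _))
  have hoffDiag : (#S.offDiag : ℝ) = #S * (#S - 1) := by
    rw [offDiag_card, Nat.cast_sub (Nat.le_mul_self _)]
    push_cast
    ring
  have hsplit : (#{i ∈ H | Set.InjOn (f i) S} : ℝ) + #bad = #H := by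
    exact_mod_cast card_filter_add_card_filter_not _
  have hS' : (#S : ℝ) * (#S - 1) ≤ 2 * δ * m := by
    rwa [div_le_iff₀ (by positivity), mul_comm m] at hS
  have hbad : (#bad : ℝ) ≤ δ * #H := by
    rw [hoffDiag, mul_div_assoc', le_div_iff₀ hm] at hcount
    nlinarith [(#H).cast_nonneg (α := ℝ)]
  linarith

/-- if `2^t ≥ |S|(|S|−1)/(2δ)`, then at least a `(1−δ)`-fraction of all
surjective linear maps `L : F_2^n → F_2^t` map `S` injectively into `F_2^t`. -/
theorem birthday_hash (n t : ℕ) (S : Finset (Fin n → ZMod 2)) (δ : ℝ)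
    (hδ : δ ∈ Set.Ioo (0 : ℝ) 1)
    (ht : (S.card : ℝ) * ((S.card : ℝ) - 1) / (2 * δ) ≤ 2 ^ t) :
    (1 - δ) *
        (Nat.card {L : (Fin n → ZMod 2) →ₗ[ZMod 2] (Fin t → ZMod 2) //
          Function.Surjective L} : ℝ) ≤
      (Nat.card {L : (Fin n → ZMod 2) →ₗ[ZMod 2] (Fin t → ZMod 2) //
        Function.Surjective L ∧ Set.InjOn L (S : Set (Fin n → ZMod 2))} : ℝ) := by
  classical
  have := Fintype.ofFinite ((Fin n → ZMod 2) →ₗ[ZMod 2] (Fin t → ZMod 2))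
  set H : Finset ((Fin n → ZMod 2) →ₗ[ZMod 2] (Fin t → ZMod 2)) := {L | Surjective L}
  have hcard (P : ((Fin n → ZMod 2) →ₗ[ZMod 2] (Fin t → ZMod 2)) → Prop) [DecidablePred P] :
      Nat.card {L : (Fin n → ZMod 2) →ₗ[ZMod 2] (Fin t → ZMod 2) // Surjective L ∧ P L} =
        #{L ∈ H | P L} := by
    rw [Nat.card_eq_fintype_card, Fintype.card_subtype, filter_filter]
  have hH : Nat.card {L : (Fin n → ZMod 2) →ₗ[ZMod 2] (Fin t → ZMod 2) // Surjective L} = #H := by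
    rw [Nat.card_eq_fintype_card, Fintype.card_subtype]
  rw [hH, hcard]
  refine birthday_bound H (fun L => ⇑L) S (by positivity) (fun x _ y _ hxy => ?_) hδ.1 ht
  have := card_mul_card_surjective_apply_eq_le (K := ZMod 2) (W := Fin t → ZMod 2) hxy
  rw [hcard, hH, Nat.card_fun, Nat.card_zmod, Nat.card_fin] at this
  exact_mod_cast this
end

section
/- Let F be a field, d a nonnegative integer, and f ∈ F[x_1,…,x_n] a nonzero polynomial of total degree at most d. Then for any finite subset U ⊆ F, the sum over all points a ∈ U^n of mult(f, a) is at most d·|U|^{n-1}. -/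
open MvPolynomial

/-- The multivariate Hasse derivative: `hasseDeriv i f` is the coefficient polynomial of
`z^i` in the expansion `f(x+z) = Σ_j f^{(j)}(x) z^j`. -/
noncomputable def hasseDeriv {n : ℕ} {R : Type*} [CommRing R] (i : Fin n →₀ ℕ)
    (f : MvPolynomial (Fin n) R) : MvPolynomial (Fin n) R :=
  (AddMonoidAlgebra.coeff f).sum fun d c =>
    (∏ k ∈ d.support ∪ i.support, Nat.choose (d k) (i k)) •
      MvPolynomial.monomial (d - i) c

/-- `f` vanishes to order (multiplicity) at least `m` at the point `a`:
all Hasse derivatives of weight less than `m` vanish at `a`. -/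
def vanishesTo {n : ℕ} {R : Type*} [CommRing R] (f : MvPolynomial (Fin n) R)
    (a : Fin n → R) (m : ℕ) : Prop :=
  ∀ j : Fin n →₀ ℕ, (j.sum fun _ e => e) < m → MvPolynomial.eval a (hasseDeriv j f) = 0

/-! Induct on the number of variables, writing `f` as a polynomial in `x₀` of degree `t` with
leading coefficient `f_t ∈ F[x₁, …]`, so that `deg f_t ≤ d - t`. Fix `a ∈ Uⁿ⁻¹` and a monomial
`yⁱ` of least degree `e = mult(f_t, a)` in `f_t(a + y)`. The coefficient `v` of `yⁱ` in
`f(x₀, a + y)` is a nonzero univariate polynomial of degree at most `t`, and the coefficient of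
`x₀ᵏ yⁱ` in `f(b + x₀, a + y)` is the `k`-th Taylor coefficient of `v` at `b`; taking `k` the
multiplicity of the root `b` of `v` gives `mult(f, (b, a)) ≤ mult(v, b) + e`. The root
multiplicities of `v` add up to at most `t`, so `∑_{b ∈ U} mult(f, (b, a)) ≤ |U| e + t`, and the
induction hypothesis for `f_t` yields `|U| ∑_{Uⁿ} mult(f, ·) ≤ d |U|ⁿ`.

The coefficients of `f(x + a)` are the Hasse derivatives of `f` at `a`, so the multiplicity is the
least total degree of a monomial of `f(x + a)`. -/

namespace MvPolynomial

variable {σ R : Type*} [CommRing R]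

noncomputable def translate (a : σ → R) : MvPolynomial σ R →ₐ[R] MvPolynomial σ R :=
  aeval fun k => X k + C (a k)

theorem translate_comp_translate (a b : σ → R) :
    (translate b).comp (translate a) = translate (a + b) := by
  refine algHom_ext fun k => ?_
  simp only [translate, AlgHom.comp_apply, aeval_X, map_add, aeval_C, algebraMap_eq,
    Pi.add_apply]
  ring

theorem translate_injective (a : σ → R) : Function.Injective (translate a) := by
  refine Function.LeftInverse.injective (g := translate (-a)) fun f => ?_
  rw [← AlgHom.comp_apply, translate_comp_translate, add_neg_cancel]
  simp [translate]

/-- The least total degree of a monomial of `f(x + a)`; it is `0` (not `∞`) when `f = 0`. -/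
noncomputable def rootMultiplicity (f : MvPolynomial σ R) (a : σ → R) : ℕ :=
  (translate a f : MvPowerSeries σ R).order.toNat

variable {f : MvPolynomial σ R} {a : σ → R}

theorem rootMultiplicity_le_degree {i : σ →₀ ℕ} (h : coeff i (translate a f) ≠ 0) :
    f.rootMultiplicity a ≤ i.degree :=
  ENat.toNat_le_of_le_natCast (MvPowerSeries.order_le (by rwa [coeff_coe]))

theorem exists_coeff_translate_ne_zero (hf : f ≠ 0) (a : σ → R) :
    ∃ i, coeff i (translate a f) ≠ 0 ∧ i.degree = f.rootMultiplicity a := by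
  have hne : (translate a f : MvPowerSeries σ R) ≠ 0 := by
    rw [Ne, coe_eq_zero_iff, ← map_zero (translate a), (translate_injective a).eq_iff]
    exact hf
  obtain ⟨i, hi, hdeg⟩ := MvPowerSeries.exists_coeff_ne_zero_and_order
    (MvPowerSeries.ne_zero_iff_order_finite.mp hne)
  refine ⟨i, by rwa [coeff_coe] at hi, ?_⟩
  rw [rootMultiplicity, ← hdeg, ENat.toNat_natCast]

theorem le_rootMultiplicity (hf : f ≠ 0) {m : ℕ}
    (h : ∀ i : σ →₀ ℕ, i.degree < m → coeff i (translate a f) = 0) :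
    m ≤ f.rootMultiplicity a := by
  obtain ⟨i, hi, hdeg⟩ := exists_coeff_translate_ne_zero hf a
  exact hdeg ▸ not_lt.mp fun hlt => hi (h i hlt)

theorem rootMultiplicity_eq_zero_of_isEmpty [IsEmpty σ] (hf : f ≠ 0) (a : σ → R) :
    f.rootMultiplicity a = 0 := by
  obtain ⟨i, -, hdeg⟩ := exists_coeff_translate_ne_zero hf a
  rw [← hdeg, Subsingleton.elim i 0, map_zero]

theorem coeff_prod_aeval_X [Fintype σ] (p : σ → Polynomial R) (i : σ →₀ ℕ) :
    coeff i (∏ k, Polynomial.aeval (X k) (p k)) = ∏ k, (p k).coeff (i k) := by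
  classical
  have hexpand : ∀ k, Polynomial.aeval (X k) (p k) = ∑ j ∈ Finset.range ((p k).natDegree + i k + 1),
      monomial (Finsupp.single k j) ((p k).coeff j) := fun k => by
    rw [Polynomial.aeval_eq_sum_range' (Nat.lt_succ_of_le (Nat.le_add_right _ (i k)))]
    simp only [smul_eq_C_mul, C_mul_X_pow_eq_monomial]
  have hsum : ∀ x : σ → ℕ, ∑ k, Finsupp.single k (x k) = i ↔ x = ⇑i := fun x =>
    ⟨fun h => h ▸ (Finsupp.coe_univ_sum_single x).symm, fun h => h ▸ Finsupp.univ_sum_single i⟩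
  simp_rw [hexpand, Finset.prod_univ_sum, ← monomial_sum_prod, coeff_sum, coeff_monomial, hsum]
  rw [Finset.sum_ite_eq']
  exact if_pos (Fintype.mem_piFinset.mpr fun k => Finset.mem_range.mpr (by omega))

theorem coeff_translate_monomial [Fintype σ] (a : σ → R) (d i : σ →₀ ℕ) (c : R) :
    coeff i (translate a (monomial d c)) = c * ∏ k, ((d k).choose (i k) * a k ^ (d k - i k)) := by
  have hfactor : ∀ k, (X k + C (a k) : MvPolynomial σ R) ^ d k =
      Polynomial.aeval (X k) ((Polynomial.X + Polynomial.C (a k)) ^ d k) := fun k => by simp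
  rw [translate, aeval_monomial, Finsupp.prod_fintype _ _ fun _ => pow_zero _, algebraMap_eq,
    coeff_C_mul]
  simp_rw [hfactor, coeff_prod_aeval_X, Polynomial.coeff_X_add_C_pow, mul_comm]

theorem coeff_translate_eq_eval_hasseDeriv {n : ℕ} (a : Fin n → R) (i : Fin n →₀ ℕ)
    (f : MvPolynomial (Fin n) R) : coeff i (translate a f) = eval a (hasseDeriv i f) := by
  conv_lhs => rw [f.as_sum]
  rw [hasseDeriv, Finsupp.sum, map_sum, map_sum, coeff_sum]
  refine Finset.sum_congr rfl fun d _ => ?_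
  have hchoose : ∏ k ∈ d.support ∪ i.support, (d k).choose (i k) = ∏ k, (d k).choose (i k) :=
    Finset.prod_subset (Finset.subset_univ _) fun k _ hk => by
      simp only [Finset.mem_union, Finsupp.mem_support_iff, not_or, not_not] at hk
      simp [hk]
  rw [coeff_translate_monomial, map_nsmul, eval_monomial, hchoose,
    Finsupp.prod_fintype _ _ fun _ => pow_zero _, nsmul_eq_mul, Nat.cast_prod,
    Finset.prod_mul_distrib]
  simp only [Finsupp.tsub_apply]
  change _ = _ * (coeff d f * _)
  ring

end MvPolynomial

theorem vanishesTo.le_rootMultiplicity {n : ℕ} {R : Type*} [CommRing R]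
    {f : MvPolynomial (Fin n) R} {a : Fin n → R} {m : ℕ} (hf : f ≠ 0) (h : vanishesTo f a m) :
    m ≤ f.rootMultiplicity a :=
  MvPolynomial.le_rootMultiplicity hf fun i hi =>
    (coeff_translate_eq_eval_hasseDeriv a i f).trans (h i hi)

namespace Polynomial

variable {R A B : Type*} [CommSemiring R] [Semiring A] [Algebra R A] [Semiring B] [Algebra R B]

noncomputable def mapLinear (g : A →ₗ[R] B) (p : A[X]) : B[X] :=
  ∑ k ∈ p.support, monomial k (g (p.coeff k))

variable (g : A →ₗ[R] B) (p : A[X])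

@[simp]
theorem coeff_mapLinear (k : ℕ) : (p.mapLinear g).coeff k = g (p.coeff k) := by
  rw [mapLinear, finsetSum_coeff]
  simp_rw [coeff_monomial]
  rw [Finset.sum_ite_eq', ite_eq_left_iff, notMem_support_iff]
  intro hk
  rw [hk, map_zero]

theorem natDegree_mapLinear_le : (p.mapLinear g).natDegree ≤ p.natDegree :=
  natDegree_le_iff_coeff_eq_zero.mpr fun k hk => by
    rw [coeff_mapLinear, coeff_eq_zero_of_natDegree_lt hk, map_zero]

theorem coeff_taylor_eq_sum {S : Type*} [Semiring S] (q : S[X]) (s : S) (k : ℕ) {N : ℕ}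
    (hN : q.natDegree < N) :
    (taylor s q).coeff k = ∑ i ∈ Finset.range N, (i.choose k : S) * q.coeff i * s ^ (i - k) := by
  rw [taylor_coeff, hasseDeriv_apply, sum_over_range' q (fun n => by simp) N hN, eval_finsetSum]
  simp only [eval_monomial]

theorem taylor_mapLinear (r : R) :
    taylor (algebraMap R B r) (p.mapLinear g) = (taylor (algebraMap R A r) p).mapLinear g := by
  ext k
  have hN := Nat.lt_succ_self p.natDegree
  rw [coeff_mapLinear, coeff_taylor_eq_sum _ _ _ hN, coeff_taylor_eq_sum _ _ _
    ((natDegree_mapLinear_le g p).trans_lt hN), map_sum]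
  refine Finset.sum_congr rfl fun i _ => ?_
  simp only [coeff_mapLinear, ← map_pow, ← nsmul_eq_mul, ← Algebra.commutes, ← Algebra.smul_def,
    map_smul, map_nsmul]

theorem coeff_taylor_rootMultiplicity_ne_zero {R : Type*} [CommRing R] {p : R[X]} (hp : p ≠ 0)
    (r : R) : (taylor r p).coeff (p.rootMultiplicity r) ≠ 0 := by
  rw [rootMultiplicity_eq_natTrailingDegree, ← taylor_apply]
  exact trailingCoeff_nonzero_iff_nonzero.mpr ((taylor_eq_zero r p).not.mpr hp)

theorem sum_rootMultiplicity_le_natDegree {R : Type*} [CommRing R] [IsDomain R] (p : R[X])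
    (s : Finset R) : ∑ r ∈ s, p.rootMultiplicity r ≤ p.natDegree := by
  classical
  calc ∑ r ∈ s, p.rootMultiplicity r = ∑ r ∈ s, p.roots.count r := by simp_rw [count_roots]
    _ ≤ ∑ r ∈ s ∪ p.roots.toFinset, p.roots.count r :=
      Finset.sum_le_sum_of_subset Finset.subset_union_left
    _ = Multiset.card p.roots :=
      Multiset.sum_count_eq_card fun r hr => Finset.mem_union_right _ (Multiset.mem_toFinset.mpr hr)
    _ ≤ p.natDegree := card_roots' p

end Polynomial

theorem Fintype.sum_piFinset_const_succ {α M : Type*} [AddCommMonoid M] {n : ℕ} (s : Finset α)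
    (g : (Fin (n + 1) → α) → M) :
    ∑ x ∈ Fintype.piFinset (fun _ => s), g x =
      ∑ b ∈ s, ∑ a ∈ Fintype.piFinset (fun _ => s), g (Fin.cons b a) := by
  rw [← Finset.sum_product']
  refine (Finset.sum_equiv (Fin.consEquiv fun _ => α) (fun q => ?_) fun _ _ => rfl).symm
  simp [Fin.consEquiv, Fin.forall_fin_succ]

namespace MvPolynomial

variable {R : Type*} [CommRing R]

theorem finSuccEquiv_translate_cons {n : ℕ} (b : R) (a : Fin n → R)
    (f : MvPolynomial (Fin (n + 1)) R) :
    finSuccEquiv R n (translate (Fin.cons b a) f) =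
      Polynomial.taylor (C b) (Polynomial.mapAlgHom (translate a) (finSuccEquiv R n f)) := by
  have hX : ∀ k, finSuccEquiv R n (translate (Fin.cons b a) (X k)) =
      Polynomial.taylor (C b) (Polynomial.mapAlgHom (translate a) (finSuccEquiv R n (X k))) := by
    intro k
    cases k using Fin.cases <;> simp [translate, finSuccEquiv_apply]
  induction f using MvPolynomial.induction_on with
  | C r => simp [translate, finSuccEquiv_apply]
  | add p q hp hq => simp only [map_add, hp, hq]
  | mul_X p k hp => rw [map_mul, map_mul, hp, hX, map_mul, map_mul, Polynomial.taylor_mul]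

theorem exists_rootMultiplicity_cons_le {n : ℕ} {f : MvPolynomial (Fin (n + 1)) R} (hf : f ≠ 0)
    (a : Fin n → R) :
    ∃ v : Polynomial R, v ≠ 0 ∧ v.natDegree ≤ (finSuccEquiv R n f).natDegree ∧
      ∀ b, f.rootMultiplicity (Fin.cons b a) ≤
        v.rootMultiplicity b + (finSuccEquiv R n f).leadingCoeff.rootMultiplicity a := by
  set p := finSuccEquiv R n f
  have hp : p ≠ 0 := (finSuccEquiv R n).injective.ne_iff' (map_zero _) |>.mpr hf
  obtain ⟨i, hi, hdeg⟩ := exists_coeff_translate_ne_zero (Polynomial.leadingCoeff_ne_zero.mpr hp) a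
  set w := Polynomial.mapAlgHom (translate a) p
  -- `v` is the coefficient of `yⁱ` in `f(x₀, a + y)`; its `x₀`-coefficient at `natDegree p` is
  -- that of `yⁱ` in `f_t(a + y)`, which is nonzero.
  set v := w.mapLinear (lcoeff R i)
  have hv : v ≠ 0 := by
    intro h
    have := congrArg (Polynomial.coeff · p.natDegree) h
    simp only [v, w, Polynomial.coeff_mapLinear, Polynomial.coe_mapAlgHom, Polynomial.coeff_map,
      Polynomial.coeff_zero] at this
    exact hi this
  refine ⟨v, hv, (Polynomial.natDegree_mapLinear_le _ _).trans Polynomial.natDegree_map_le,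
    fun b => ?_⟩
  set k := v.rootMultiplicity b
  have hcoeff : coeff (Finsupp.cons k i) (translate (Fin.cons b a) f) =
      (Polynomial.taylor b v).coeff k := by
    rw [← finSuccEquiv_coeff_coeff, finSuccEquiv_translate_cons, ← algebraMap_eq,
      ← Algebra.algebraMap_self_apply b, Polynomial.taylor_mapLinear, Polynomial.coeff_mapLinear]
    rfl
  calc f.rootMultiplicity (Fin.cons b a) ≤ (Finsupp.cons k i).degree :=
        rootMultiplicity_le_degree (hcoeff ▸ Polynomial.coeff_taylor_rootMultiplicity_ne_zero hv b)
    _ = k + p.leadingCoeff.rootMultiplicity a := by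
        rw [← hdeg]
        exact Finsupp.sum_cons n i k

variable [IsDomain R]

theorem sum_rootMultiplicity_cons_le {n : ℕ} {f : MvPolynomial (Fin (n + 1)) R} (hf : f ≠ 0)
    (a : Fin n → R) (U : Finset R) :
    ∑ b ∈ U, f.rootMultiplicity (Fin.cons b a) ≤
      U.card * (finSuccEquiv R n f).leadingCoeff.rootMultiplicity a +
        (finSuccEquiv R n f).natDegree := by
  obtain ⟨v, -, hdeg, hle⟩ := exists_rootMultiplicity_cons_le hf a
  calc ∑ b ∈ U, f.rootMultiplicity (Fin.cons b a)
      ≤ ∑ b ∈ U, (v.rootMultiplicity b + (finSuccEquiv R n f).leadingCoeff.rootMultiplicity a) :=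
        Finset.sum_le_sum fun b _ => hle b
    _ = ∑ b ∈ U, v.rootMultiplicity b +
          U.card * (finSuccEquiv R n f).leadingCoeff.rootMultiplicity a := by
        rw [Finset.sum_add_distrib, Finset.sum_const, smul_eq_mul]
    _ ≤ _ := by
        have := v.sum_rootMultiplicity_le_natDegree U
        omega

theorem card_mul_sum_rootMultiplicity_le {n d : ℕ} {f : MvPolynomial (Fin n) R} (hf : f ≠ 0)
    (hdeg : f.totalDegree ≤ d) (U : Finset R) :
    U.card * ∑ a ∈ Fintype.piFinset (fun _ => U), f.rootMultiplicity a ≤ d * U.card ^ n := by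
  induction n generalizing d with
  | zero => simp [rootMultiplicity_eq_zero_of_isEmpty hf]
  | succ n ih =>
    set p := finSuccEquiv R n f
    have hp : p.leadingCoeff ≠ 0 := Polynomial.leadingCoeff_ne_zero.mpr
      ((finSuccEquiv R n).injective.ne_iff' (map_zero _) |>.mpr hf)
    have ht : p.natDegree ≤ d :=
      (natDegree_finSuccEquiv f).trans_le ((degreeOf_le_totalDegree f 0).trans hdeg)
    have hlead : p.leadingCoeff.totalDegree ≤ d - p.natDegree :=
      Nat.le_sub_of_add_le ((totalDegree_coeff_finSuccEquiv_add_le f _ hp).trans hdeg)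
    calc U.card * ∑ x ∈ Fintype.piFinset (fun _ => U), f.rootMultiplicity x
        = U.card * ∑ a ∈ Fintype.piFinset (fun _ => U), ∑ b ∈ U,
            f.rootMultiplicity (Fin.cons b a) := by
          rw [Fintype.sum_piFinset_const_succ, Finset.sum_comm]
      _ ≤ U.card * ∑ a ∈ Fintype.piFinset (fun _ => U),
            (U.card * p.leadingCoeff.rootMultiplicity a + p.natDegree) := by
          gcongr with a
          exact sum_rootMultiplicity_cons_le hf a U
      _ = U.card * (U.card * ∑ a ∈ Fintype.piFinset (fun _ => U),
            p.leadingCoeff.rootMultiplicity a + p.natDegree * U.card ^ n) := by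
          rw [Finset.sum_add_distrib, ← Finset.mul_sum, Finset.sum_const,
            Fintype.card_piFinset_const, smul_eq_mul, mul_comm (U.card ^ n)]
      _ ≤ U.card * ((d - p.natDegree) * U.card ^ n + p.natDegree * U.card ^ n) :=
          Nat.mul_le_mul_left _ (Nat.add_le_add_right (ih hp hlead) _)
      _ = d * U.card ^ (n + 1) := by
          rw [← add_mul, Nat.sub_add_cancel ht]
          ring

theorem sum_rootMultiplicity_le {n d : ℕ} {f : MvPolynomial (Fin n) R} (hf : f ≠ 0)
    (hdeg : f.totalDegree ≤ d) (U : Finset R) :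
    ∑ a ∈ Fintype.piFinset (fun _ => U), f.rootMultiplicity a ≤ d * U.card ^ (n - 1) := by
  cases n with
  | zero => simp [rootMultiplicity_eq_zero_of_isEmpty hf]
  | succ n =>
    rcases U.eq_empty_or_nonempty with rfl | hU
    · simp
    · refine Nat.le_of_mul_le_mul_left ?_ hU.card_pos
      calc _ ≤ d * U.card ^ (n + 1) := card_mul_sum_rootMultiplicity_le hf hdeg U
        _ = U.card * (d * U.card ^ (n + 1 - 1)) := by simp only [Nat.add_sub_cancel]; ring

end MvPolynomial

/-- Schwartz–Zippel with multiplicities. If `f ≠ 0` has total degree at most `d`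
and vanishes to order at least `m a` at each point `a` of `U^n`, then
`∑_{a ∈ U^n} m a ≤ d · |U|^{n-1}` (hence the sum of the multiplicities is so bounded). -/
theorem schwartz_zippel_mult {F : Type*} [Field F] {n d : ℕ}
    (f : MvPolynomial (Fin n) F) (hf : f ≠ 0) (hdeg : f.totalDegree ≤ d)
    (U : Finset F) (m : (Fin n → F) → ℕ)
    (hm : ∀ a : Fin n → F, (∀ i, a i ∈ U) → vanishesTo f a (m a)) :
    ∑ a ∈ Fintype.piFinset (fun _ : Fin n => U), m a ≤ d * U.card ^ (n - 1) :=
  calc ∑ a ∈ Fintype.piFinset (fun _ : Fin n => U), m a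
      ≤ ∑ a ∈ Fintype.piFinset (fun _ : Fin n => U), f.rootMultiplicity a :=
        Finset.sum_le_sum fun a ha => (hm a (Fintype.mem_piFinset.mp ha)).le_rootMultiplicity hf
    _ ≤ d * U.card ^ (n - 1) := sum_rootMultiplicity_le hf hdeg U
end

section
/- Let f ∈ F[x_1,…,x_n] be a polynomial over a field F, let H = (h_1,…,h_n) be a tuple of polynomials in F[y_1,…,y_m], and let a ∈ F^m. Then mult(f∘H, a) ≥ mult(f, H(a)). -/
open MvPolynomial

/-! Evaluating the Hasse derivatives of `f` at `a` reads off the coefficients of the Taylor shift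
`f(x + a)`, so `f` vanishes to order `r` at `a` iff `f(x + a)` lies in `(x_1, …, x_n)^r`. The
Taylor shift of `f ∘ H` at `a` is the Taylor shift of `f` at `H(a)` composed with the polynomials
`h_k(y + a) - h_k(a)`, which have no constant term; a substitution sending the variables into
`(y_1, …, y_m)` sends `(x_1, …, x_n)^r` into `(y_1, …, y_m)^r`. -/

open Finset

namespace MvPolynomial

variable {σ R : Type*} [CommSemiring R]

theorem X_add_C_pow_eq_sum (k : σ) (b : R) (e : ℕ) :
    (X k + C b) ^ e =
      ∑ i ∈ range (e + 1), monomial (Finsupp.single k i) (b ^ (e - i) * e.choose i) := by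
  rw [add_pow]
  refine sum_congr rfl fun i _ => ?_
  rw [X_pow_eq_monomial, ← C_pow, ← map_natCast C, mul_assoc, ← C_mul, mul_comm, C_mul_monomial,
    mul_one]

theorem coeff_prod_X_add_C_pow [Fintype σ] [DecidableEq σ] (a : σ → R) (d : σ → ℕ)
    (j : σ →₀ ℕ) :
    coeff j (∏ k, (X k + C (a k)) ^ d k) = ∏ k, a k ^ (d k - j k) * (d k).choose (j k) := by
  simp_rw [X_add_C_pow_eq_sum, prod_univ_sum, ← monomial_sum_prod, coeff_sum, coeff_monomial]
  rw [sum_eq_single (⇑j)]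
  · rw [if_pos (Finsupp.univ_sum_single j)]
  · intro x _ hx
    rw [if_neg]
    intro h
    apply hx
    ext k
    simp [← h, Finsupp.finsetSum_apply, Finsupp.single_apply]
  · intro hj
    rw [if_pos (Finsupp.univ_sum_single j)]
    simp only [Fintype.mem_piFinset, mem_range, not_forall, not_lt] at hj
    obtain ⟨k, hk⟩ := hj
    exact prod_eq_zero (mem_univ k) (by simp [Nat.choose_eq_zero_of_lt (Nat.lt_of_succ_le hk)])

theorem constantCoeff_aeval_X_add_C (a : σ → R) (p : MvPolynomial σ R) :
    constantCoeff (aeval (fun k => X k + C (a k)) p) = eval a p := by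
  induction p using MvPolynomial.induction_on <;> simp_all

theorem mem_idealOfVars_iff {p : MvPolynomial σ R} :
    p ∈ idealOfVars σ R ↔ constantCoeff p = 0 := by
  rw [← pow_one (idealOfVars σ R), mem_pow_idealOfVars_iff']
  simp [Finsupp.degree_eq_zero_iff, constantCoeff_eq]

theorem aeval_mem_pow_idealOfVars {τ : Type*} {G : σ → MvPolynomial τ R}
    (hG : ∀ k, G k ∈ idealOfVars τ R) {p : MvPolynomial σ R} {r : ℕ}
    (hp : p ∈ idealOfVars σ R ^ r) : aeval G p ∈ idealOfVars τ R ^ r := by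
  have hmap : (idealOfVars σ R).map (aeval G) ≤ idealOfVars τ R := by
    rw [Ideal.map_span, Ideal.span_le, ← Set.range_comp, Set.range_subset_iff]
    simpa using hG
  exact Ideal.pow_right_mono hmap r
    (Ideal.map_pow (aeval (R := R) G) _ r ▸ Ideal.mem_map_of_mem _ hp)

end MvPolynomial

theorem hasseDeriv_eq_sum_univ {n : ℕ} {R : Type*} [CommRing R] (j : Fin n →₀ ℕ)
    (f : MvPolynomial (Fin n) R) :
    hasseDeriv j f =
      ∑ d ∈ f.support, (∏ k, (d k).choose (j k)) • monomial (d - j) (coeff d f) := by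
  refine sum_congr rfl fun d _ => congrArg₂ _ (prod_subset (subset_univ _) fun k _ hk => ?_) rfl
  simp_all

theorem eval_hasseDeriv {n : ℕ} {R : Type*} [CommRing R] (a : Fin n → R) (j : Fin n →₀ ℕ)
    (f : MvPolynomial (Fin n) R) :
    eval a (hasseDeriv j f) = coeff j (aeval (fun k => X k + C (a k)) f) := by
  rw [hasseDeriv_eq_sum_univ, aeval_def, eval₂_eq', coeff_sum, map_sum]
  refine sum_congr rfl fun d _ => ?_
  rw [algebraMap_eq, coeff_C_mul, coeff_prod_X_add_C_pow, nsmul_eq_mul, map_mul, eval_monomial,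
    Finsupp.prod_fintype _ _ (fun _ => pow_zero _), prod_mul_distrib]
  simp only [Nat.cast_prod, map_prod, map_natCast, Finsupp.tsub_apply]
  ring

theorem vanishesTo_iff_mem_pow_idealOfVars {n : ℕ} {R : Type*} [CommRing R]
    (f : MvPolynomial (Fin n) R) (a : Fin n → R) (r : ℕ) :
    vanishesTo f a r ↔ aeval (fun k => X k + C (a k)) f ∈ idealOfVars (Fin n) R ^ r := by
  rw [mem_pow_idealOfVars_iff']
  simp only [vanishesTo, eval_hasseDeriv]
  -- the weight `j.sum fun _ e => e` in `vanishesTo` unfolds to `Finsupp.degree j`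
  rfl

/-- `mult(f ∘ H, a) ≥ mult(f, H(a))`: if `f` vanishes to order at least `r` at the
point `H(a)`, then the composition `f(h_1(y),…,h_n(y))` vanishes to order at least `r` at `a`. -/
theorem mult_comp {F : Type*} [Field F] {n m : ℕ}
    (f : MvPolynomial (Fin n) F) (H : Fin n → MvPolynomial (Fin m) F)
    (a : Fin m → F) (r : ℕ)
    (h : vanishesTo f (fun k => MvPolynomial.eval a (H k)) r) :
    vanishesTo (MvPolynomial.aeval H f) a r := by
  set b := fun k => eval a (H k)
  set G := fun k => aeval (fun l => X l + C (a l)) (H k) - C (b k)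
  have hG : ∀ k, G k ∈ idealOfVars (Fin m) F := fun k => by
    rw [mem_idealOfVars_iff, map_sub, constantCoeff_aeval_X_add_C, constantCoeff_C, sub_self]
  have hcomp : aeval (fun l => X l + C (a l)) (aeval H f) =
      aeval G (aeval (fun k => X k + C (b k)) f) := by
    rw [comp_aeval_apply, comp_aeval_apply]
    congr 2 with k
    simp [G]
  rw [vanishesTo_iff_mem_pow_idealOfVars] at h ⊢
  rw [hcomp]
  exact aeval_mem_pow_idealOfVars hG h
end

section
/- Let q be a prime power and m, d, n, t, ℓ natural numbers with t ≤ q, m = (q^2 + t − 1)ℓ and d = q^2 t ℓ − 1. Suppose Q ∈ F_q[x_1,…,x_n] has degree at most d and vanishes with multiplicity at least m at every point of a set K ⊆ F_q^n. If for some u, v ∈ F_q^n and c ∈ F_q^n the affine 2-flat {c + u s_1 + v s_2 : s_1, s_2 ∈ F_q} contains at least qt points of K, then the bivariate polynomial Q^{(j)}(c + u t_1 + v t_2) ∈ F_q[t_1, t_2] is identically zero for every index tuple j ∈ Z_{≥0}^n of weight less than tℓ. -/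
open MvPolynomial

/-!
Restricted to the plane, `R := Q^{(j)}(c + u t₁ + v t₂)` has degree at most `d - wt j`, and by
the chain rule it vanishes to order `m - wt j` at each of the at least `q t` parameters `s` with
`c + s₁ u + s₂ v ∈ K`. The Schwartz–Zippel bound with multiplicities in two variables, proved by
slicing along the first coordinate, then forces `(m - wt j) q t ≤ (d - wt j) q` unless `R = 0`,
and the choice of `m` and `d` makes this impossible once `wt j < t ℓ`.
-/

def multiChoose {σ : Type*} [Fintype σ] (d j : σ →₀ ℕ) : ℕ := ∏ k, (d k).choose (j k)

lemma multiChoose_eq_zero_of_not_le {σ : Type*} [Fintype σ] {d j : σ →₀ ℕ} (h : ¬ j ≤ d) :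
    multiChoose d j = 0 := by
  obtain ⟨k, hk⟩ := not_forall.mp (mt Finsupp.le_def.mpr h)
  exact Finset.prod_eq_zero (Finset.mem_univ k) (Nat.choose_eq_zero_of_lt (not_le.mp hk))

section HasseDeriv

variable {n : ℕ} {R : Type*} [CommRing R]

lemma hasseDeriv_monomial (j d : Fin n →₀ ℕ) (c : R) :
    hasseDeriv j (monomial d c) = multiChoose d j • monomial (d - j) c := by
  rw [hasseDeriv, ← single_eq_monomial, AddMonoidAlgebra.coeff_single,
    Finsupp.sum_single_index (by simp), multiChoose]
  congr 1
  refine Finset.prod_subset (Finset.subset_univ _) fun k _ hk => ?_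
  simp only [Finset.mem_union, Finsupp.mem_support_iff, not_or, not_not] at hk
  rw [hk.1, hk.2, Nat.choose_zero_right]

lemma hasseDeriv_add (j : Fin n →₀ ℕ) (p q : MvPolynomial (Fin n) R) :
    hasseDeriv j (p + q) = hasseDeriv j p + hasseDeriv j q := by
  rw [hasseDeriv, AddMonoidAlgebra.coeff_add]
  exact Finsupp.sum_add_index' (fun _ => by simp) fun _ _ _ => by rw [map_add, smul_add]

lemma coeff_hasseDeriv (j k : Fin n →₀ ℕ) (p : MvPolynomial (Fin n) R) :
    coeff k (hasseDeriv j p) = multiChoose (j + k) j • coeff (j + k) p := by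
  induction p using MvPolynomial.induction_on' with
  | monomial d c =>
    rw [hasseDeriv_monomial, coeff_smul, coeff_monomial, coeff_monomial]
    by_cases hd : d = j + k
    · subst hd
      rw [if_pos (add_tsub_cancel_left j k), if_pos rfl]
    · rw [if_neg hd, smul_zero]
      split_ifs with hk
      · refine smul_eq_zero_of_left (multiChoose_eq_zero_of_not_le fun hjd => hd ?_) _
        rw [← hk, add_tsub_cancel_of_le hjd]
      · exact smul_zero _
  | add p q hp hq => rw [hasseDeriv_add, coeff_add, hp, hq, coeff_add, smul_add]

lemma hasseDeriv_zero_left (p : MvPolynomial (Fin n) R) : hasseDeriv 0 p = p := by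
  ext k
  simp [coeff_hasseDeriv, multiChoose]

lemma hasseDeriv_hasseDeriv (a b : Fin n →₀ ℕ) (p : MvPolynomial (Fin n) R) :
    hasseDeriv b (hasseDeriv a p) = multiChoose (a + b) a • hasseDeriv (a + b) p := by
  ext e
  simp only [coeff_smul, coeff_hasseDeriv, smul_smul, ← add_assoc]
  congr 1
  simp only [multiChoose, ← Finset.prod_mul_distrib, Finsupp.add_apply]
  refine Finset.prod_congr rfl fun k _ => ?_
  have := Nat.choose_mul (n := a k + b k + e k) (Nat.le_add_right (a k) (b k))
  rw [Nat.add_sub_cancel_left, add_assoc, Nat.add_sub_cancel_left, ← add_assoc] at this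
  rw [mul_comm, ← this, mul_comm]

lemma multiChoose_add_single_of_eq_zero {d j : Fin n →₀ ℕ} {i : Fin n} (h : j i = 0) :
    multiChoose (d + Finsupp.single i 1) j = multiChoose d j := by
  refine Finset.prod_congr rfl fun k _ => ?_
  rcases eq_or_ne i k with rfl | hk
  · simp [h]
  · simp [hk]

lemma multiChoose_add_single {d j : Fin n →₀ ℕ} {i : Fin n} (h : j i ≠ 0) :
    multiChoose (d + Finsupp.single i 1) j =
      multiChoose d j + multiChoose d (j - Finsupp.single i 1) := by
  have away {k} (hk : k ∈ ({i}ᶜ : Finset (Fin n))) : Finsupp.single i 1 k = 0 :=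
    Finsupp.single_eq_of_ne (by simpa using hk)
  have hd : ∏ k ∈ {i}ᶜ, (d k + Finsupp.single i 1 k).choose (j k) =
      ∏ k ∈ {i}ᶜ, (d k).choose (j k) :=
    Finset.prod_congr rfl fun k hk => by rw [away hk, add_zero]
  have hj : ∏ k ∈ {i}ᶜ, (d k).choose (j k - Finsupp.single i 1 k) =
      ∏ k ∈ {i}ᶜ, (d k).choose (j k) :=
    Finset.prod_congr rfl fun k hk => by rw [away hk, tsub_zero]
  obtain ⟨w, hw⟩ := Nat.exists_eq_succ_of_ne_zero h
  simp only [multiChoose, Fintype.prod_eq_mul_prod_compl i, Finsupp.add_apply,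
    Finsupp.tsub_apply, hd, hj]
  simp only [Finsupp.single_eq_same, hw, Nat.succ_sub_one, Nat.choose_succ_succ', add_mul]
  exact add_comm _ _

lemma hasseDeriv_mul_X (j : Fin n →₀ ℕ) (i : Fin n) (p : MvPolynomial (Fin n) R) :
    hasseDeriv j (p * X i) = hasseDeriv j p * X i +
      if j i = 0 then 0 else hasseDeriv (j - Finsupp.single i 1) p := by
  induction p using MvPolynomial.induction_on' with
  | monomial d c =>
    have hX (e : Fin n →₀ ℕ) : monomial e c * X i = monomial (e + Finsupp.single i 1) c := by
      rw [X, monomial_mul, mul_one]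
    simp only [hX, hasseDeriv_monomial, smul_mul_assoc]
    split_ifs with hji
    · have hidx : d + Finsupp.single i 1 - j = d - j + Finsupp.single i 1 := by
        ext k
        rcases eq_or_ne i k with rfl | hk
        · simp [hji]
        · simp [hk]
      rw [multiChoose_add_single_of_eq_zero hji, add_zero, hidx]
    · have hidx : d + Finsupp.single i 1 - j = d - (j - Finsupp.single i 1) := by
        ext k
        rcases eq_or_ne i k with rfl | hk
        · simp only [Finsupp.tsub_apply, Finsupp.add_apply, Finsupp.single_eq_same]; omega
        · simp [hk]
      rw [multiChoose_add_single hji, add_smul, hidx]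
      congr 1
      by_cases hjd : j ≤ d
      · have hidx' : d - (j - Finsupp.single i 1) = d - j + Finsupp.single i 1 := by
          ext k
          have := hjd k
          rcases eq_or_ne i k with rfl | hk
          · simp only [Finsupp.tsub_apply, Finsupp.add_apply, Finsupp.single_eq_same]; omega
          · simp [hk]
        rw [hidx']
      · simp [multiChoose_eq_zero_of_not_le hjd]
  | add p q hp hq =>
    simp only [add_mul, hasseDeriv_add, hp, hq]
    split_ifs <;> ring

noncomputable def mvTaylor (x : Fin n → R) : MvPolynomial (Fin n) R →ₐ[R] MvPolynomial (Fin n) R :=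
  aeval fun i => C (x i) + X i

lemma coeff_mvTaylor (x : Fin n → R) (p : MvPolynomial (Fin n) R) (j : Fin n →₀ ℕ) :
    coeff j (mvTaylor x p) = eval x (hasseDeriv j p) := by
  induction p using MvPolynomial.induction_on generalizing j with
  | C a =>
    rw [mvTaylor, aeval_C, algebraMap_eq, coeff_C]
    split_ifs with hj
    · subst hj
      rw [hasseDeriv_zero_left, eval_C]
    · rw [← monomial_zero', hasseDeriv_monomial,
        multiChoose_eq_zero_of_not_le fun h => hj (nonpos_iff_eq_zero.mp h).symm, zero_smul,
        map_zero]
  | add p q hp hq => rw [map_add, coeff_add, hasseDeriv_add, map_add, hp, hq]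
  | mul_X p i hp =>
    rw [map_mul, show mvTaylor x (X i) = C (x i) + X i from aeval_X _ _, mul_add, coeff_add,
      mul_comm _ (C _), coeff_C_mul, coeff_mul_X', hasseDeriv_mul_X, map_add, map_mul, eval_X, hp,
      mul_comm]
    congr 1
    by_cases h : j i = 0 <;> simp [h, hp]

end HasseDeriv

section

variable {σ τ : Type*} {R : Type*} [CommRing R]

def VanishesBelow (M : ℕ) (p : MvPolynomial σ R) : Prop :=
  ∀ e : σ →₀ ℕ, e.degree < M → coeff e p = 0

namespace VanishesBelow

variable {M M' : ℕ} {p q : MvPolynomial σ R}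

lemma mono (hp : VanishesBelow M p) (h : M' ≤ M) : VanishesBelow M' p :=
  fun e he => hp e (he.trans_le h)

lemma sum {ι : Type*} (s : Finset ι) {f : ι → MvPolynomial σ R}
    (h : ∀ i ∈ s, VanishesBelow M (f i)) : VanishesBelow M (∑ i ∈ s, f i) :=
  fun e he => by rw [coeff_sum]; exact Finset.sum_eq_zero fun i hi => h i hi e he

lemma mul (hp : VanishesBelow M p) (hq : VanishesBelow M' q) :
    VanishesBelow (M + M') (p * q) := by
  intro e he
  classical
  rw [coeff_mul]
  refine Finset.sum_eq_zero fun ab hab => ?_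
  rw [Finset.HasAntidiagonal.mem_antidiagonal] at hab
  have : ab.1.degree + ab.2.degree < M + M' := by rwa [← map_add, hab]
  rcases lt_or_ge ab.1.degree M with h | h
  · rw [hp _ h, zero_mul]
  · rw [hq _ (by omega), mul_zero]

lemma prod {ι : Type*} (s : Finset ι) {f : ι → MvPolynomial σ R} {m : ι → ℕ}
    (h : ∀ i ∈ s, VanishesBelow (m i) (f i)) : VanishesBelow (∑ i ∈ s, m i) (∏ i ∈ s, f i) := by
  classical
  induction s using Finset.induction_on with
  | empty => intro e he; simp at he
  | insert a s ha ih =>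
    rw [Finset.sum_insert ha, Finset.prod_insert ha]
    exact (h a (Finset.mem_insert_self a s)).mul
      (ih fun i hi => h i (Finset.mem_insert_of_mem hi))

lemma pow (hp : VanishesBelow M p) (k : ℕ) : VanishesBelow (k * M) (p ^ k) := by
  simpa using prod (Finset.range k) fun _ _ => hp

lemma aeval {B : σ → MvPolynomial τ R} (hB : ∀ i, constantCoeff (B i) = 0)
    (hp : VanishesBelow M p) : VanishesBelow M (aeval B p) := by
  have hB1 (i : σ) : VanishesBelow 1 (B i) := fun e he => by
    rw [(Finsupp.degree_eq_zero_iff e).mp (Nat.lt_one_iff.mp he), ← constantCoeff_eq, hB]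
  rw [p.as_sum, map_sum]
  refine sum _ fun e he => ?_
  rw [aeval_monomial, Finsupp.prod]
  have hM : M ≤ ∑ i ∈ e.support, e i * 1 := by
    simp only [mul_one]
    exact not_lt.mp fun h => mem_support_iff.mp he (hp e h)
  refine (mul (M := 0) (fun _ h => absurd h (Nat.not_lt_zero _))
    (prod _ fun i _ => (hB1 i).pow (e i))).mono ?_
  omega

end VanishesBelow

end

section Multiplicity

variable {n k : ℕ} {R : Type*} [CommRing R]

lemma vanishesTo_iff_vanishesBelow_mvTaylor {p : MvPolynomial (Fin n) R} {x : Fin n → R}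
    {M : ℕ} : vanishesTo p x M ↔ VanishesBelow M (mvTaylor x p) := by
  simp only [VanishesBelow, coeff_mvTaylor]
  rfl

lemma vanishesTo.hasseDeriv {p : MvPolynomial (Fin n) R} {x : Fin n → R} {M : ℕ}
    (hp : vanishesTo p x M) (j : Fin n →₀ ℕ) : vanishesTo (hasseDeriv j p) x (M - j.degree) := by
  intro e he
  have : (j + e).degree < M := by
    rw [map_add]
    exact Nat.add_lt_of_lt_sub' he
  rw [hasseDeriv_hasseDeriv, map_nsmul, hp _ this, smul_zero]

lemma vanishesTo.aeval {p : MvPolynomial (Fin n) R} {A : Fin n → MvPolynomial (Fin k) R}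
    {s : Fin k → R} {M : ℕ} (hp : vanishesTo p (fun i => eval s (A i)) M) :
    vanishesTo (MvPolynomial.aeval A p) s M := by
  rw [vanishesTo_iff_vanishesBelow_mvTaylor] at hp ⊢
  have hcomp : (mvTaylor s).comp (MvPolynomial.aeval A) =
      (MvPolynomial.aeval fun i => mvTaylor s (A i) - C (eval s (A i))).comp
        (mvTaylor fun i => eval s (A i)) := by
    ext i : 1
    simp [mvTaylor]
  rw [← AlgHom.comp_apply, hcomp, AlgHom.comp_apply]
  refine hp.aeval fun i => ?_
  rw [map_sub, constantCoeff_C, constantCoeff_eq, coeff_mvTaylor, hasseDeriv_zero_left, sub_self]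

lemma totalDegree_hasseDeriv_le (j : Fin n →₀ ℕ) (p : MvPolynomial (Fin n) R) :
    (hasseDeriv j p).totalDegree ≤ p.totalDegree - j.degree := by
  refine Finset.sup_le fun e he => ?_
  have hje : coeff (j + e) p ≠ 0 := fun h0 =>
    mem_support_iff.mp he (by rw [coeff_hasseDeriv, h0, smul_zero])
  have := le_totalDegree (mem_support_iff.mpr hje)
  change e.degree ≤ _
  change (j + e).degree ≤ _ at this
  rw [map_add] at this
  omega

lemma totalDegree_aeval_le {σ τ : Type*} {B : σ → MvPolynomial τ R}
    (hB : ∀ i, (B i).totalDegree ≤ 1) (p : MvPolynomial σ R) :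
    (aeval B p).totalDegree ≤ p.totalDegree := by
  conv_lhs => rw [p.as_sum, map_sum]
  refine (totalDegree_finsetSum _ _).trans (Finset.sup_le fun e he => ?_)
  rw [aeval_monomial, algebraMap_eq]
  refine (totalDegree_mul _ _).trans ?_
  rw [totalDegree_C, zero_add, Finsupp.prod]
  refine (totalDegree_finsetProd _ _).trans (le_trans ?_ (le_totalDegree he))
  calc ∑ i ∈ e.support, (B i ^ e i).totalDegree
      ≤ ∑ i ∈ e.support, e i :=
        Finset.sum_le_sum fun i _ => (totalDegree_pow _ _).trans
          ((Nat.mul_le_mul_left _ (hB i)).trans_eq (mul_one _))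
    _ = e.sum fun _ m => m := rfl

end Multiplicity

lemma Polynomial.sum_rootMultiplicity_le_natDegree_s15 {R : Type*} [CommRing R] [IsDomain R]
    (p : Polynomial R) (s : Finset R) : ∑ b ∈ s, p.rootMultiplicity b ≤ p.natDegree := by
  classical
  simp_rw [← Polynomial.count_roots]
  calc ∑ b ∈ s, p.roots.count b ≤ ∑ b ∈ s ∪ p.roots.toFinset, p.roots.count b :=
        Finset.sum_le_sum_of_subset Finset.subset_union_left
    _ = Multiset.card p.roots := Multiset.sum_count_eq_card fun _ hb =>
        Finset.mem_union_right _ (Multiset.mem_toFinset.mpr hb)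
    _ ≤ p.natDegree := Polynomial.card_roots' p

section Bivariate

variable {R : Type*} [CommRing R]

-- `X 1` becomes the outer variable and `X 0` the variable of the coefficients.
noncomputable def toPolyPoly : MvPolynomial (Fin 2) R →ₐ[R] Polynomial (Polynomial R) :=
  aeval ![Polynomial.C Polynomial.X, Polynomial.X]

lemma coeff_coeff_toPolyPoly (f : MvPolynomial (Fin 2) R) (i j : ℕ) :
    ((toPolyPoly f).coeff j).coeff i = coeff (Finsupp.single 0 i + Finsupp.single 1 j) f := by
  induction f using MvPolynomial.induction_on' with
  | monomial e c =>
    have : toPolyPoly (monomial e c) =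
        Polynomial.monomial (e 1) (Polynomial.monomial (e 0) c) := by
      rw [toPolyPoly, aeval_monomial, Finsupp.prod_fintype _ _ fun _ => pow_zero _,
        Fin.prod_univ_two, Polynomial.algebraMap_apply, Polynomial.algebraMap_eq]
      simp [← Polynomial.C_mul_X_pow_eq_monomial, ← map_pow, mul_assoc]
    rw [this, Polynomial.coeff_monomial, coeff_monomial]
    simp only [Finsupp.ext_iff, Fin.forall_fin_two]
    by_cases hj : e 1 = j <;> by_cases hi : e 0 = i <;> simp [Polynomial.coeff_monomial, hi, hj]
  | add p q hp hq => rw [map_add, Polynomial.coeff_add, Polynomial.coeff_add, hp, hq, coeff_add]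

lemma toPolyPoly_ne_zero {f : MvPolynomial (Fin 2) R} (hf : f ≠ 0) : toPolyPoly f ≠ 0 := by
  refine fun h => hf (MvPolynomial.ext _ _ fun e => ?_)
  have he : e = Finsupp.single 0 (e 0) + Finsupp.single 1 (e 1) := by
    ext k
    fin_cases k <;> simp
  rw [he, ← coeff_coeff_toPolyPoly, h]
  simp

lemma coeff_coeff_toPolyPoly_hasseDeriv (f : MvPolynomial (Fin 2) R) (a b i j : ℕ) :
    ((toPolyPoly (hasseDeriv (Finsupp.single 0 a + Finsupp.single 1 b) f)).coeff j).coeff i =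
      ((i + a).choose a * (j + b).choose b) • ((toPolyPoly f).coeff (j + b)).coeff (i + a) := by
  have hidx : Finsupp.single 0 a + Finsupp.single 1 b +
      (Finsupp.single 0 i + Finsupp.single 1 j) =
        Finsupp.single (0 : Fin 2) (i + a) + Finsupp.single 1 (j + b) := by
    ext k
    fin_cases k <;> simp [add_comm]
  rw [coeff_coeff_toPolyPoly, coeff_hasseDeriv, coeff_coeff_toPolyPoly, hidx, multiChoose,
    Fin.prod_univ_two]
  simp

noncomputable def fixFirst (a : R) (f : MvPolynomial (Fin 2) R) : Polynomial R :=
  (toPolyPoly f).map (Polynomial.evalRingHom a)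

lemma eval_fixFirst (s : Fin 2 → R) (f : MvPolynomial (Fin 2) R) :
    (fixFirst (s 0) f).eval (s 1) = eval s f := by
  have : (Polynomial.evalRingHom (s 1)).comp
      ((Polynomial.mapRingHom (Polynomial.evalRingHom (s 0))).comp toPolyPoly.toRingHom) =
      eval s := by
    ext i : 2
    · simp [toPolyPoly]
    · fin_cases i <;> simp [toPolyPoly]
  exact RingHom.congr_fun this f

lemma hasseDeriv_fixFirst (a : R) (f : MvPolynomial (Fin 2) R) (i : ℕ) :
    Polynomial.hasseDeriv i (fixFirst a f) = fixFirst a (hasseDeriv (Finsupp.single 1 i) f) := by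
  ext j
  have : (toPolyPoly (hasseDeriv (Finsupp.single 1 i) f)).coeff j =
      (j + i).choose i • (toPolyPoly f).coeff (j + i) := by
    ext l
    simpa using coeff_coeff_toPolyPoly_hasseDeriv f 0 i l j
  simp [fixFirst, Polynomial.hasseDeriv_coeff, this]

lemma coeff_taylor_fixFirst (s : Fin 2 → R) (f : MvPolynomial (Fin 2) R) (i : ℕ) :
    (Polynomial.taylor (s 1) (fixFirst (s 0) f)).coeff i =
      eval s (hasseDeriv (Finsupp.single 1 i) f) := by
  rw [Polynomial.taylor_coeff, hasseDeriv_fixFirst, eval_fixFirst]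

lemma coeff_fixFirst_hasseDeriv (a : R) (f : MvPolynomial (Fin 2) R) (m j : ℕ) :
    (fixFirst a (hasseDeriv (Finsupp.single 0 m) f)).coeff j =
      (Polynomial.taylor a ((toPolyPoly f).coeff j)).coeff m := by
  have : (toPolyPoly (hasseDeriv (Finsupp.single 0 m) f)).coeff j =
      Polynomial.hasseDeriv m ((toPolyPoly f).coeff j) := by
    ext l
    simpa [Polynomial.hasseDeriv_coeff] using coeff_coeff_toPolyPoly_hasseDeriv f m 0 l j
  rw [Polynomial.taylor_coeff, fixFirst, Polynomial.coeff_map, this]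
  rfl

end Bivariate

section SchwartzZippel

variable {F : Type*} [Field F] [Fintype F] [DecidableEq F]

lemma mul_card_column_le {f : MvPolynomial (Fin 2) F} (hf : toPolyPoly f ≠ 0) {M : ℕ}
    {T : Finset (Fin 2 → F)} (hT : ∀ s ∈ T, vanishesTo f s M) (a : F) :
    M * {s ∈ T | s 0 = a}.card ≤
      Fintype.card F * (toPolyPoly f).leadingCoeff.rootMultiplicity a +
        (toPolyPoly f).natDegree := by
  set P := toPolyPoly f
  set m := P.leadingCoeff.rootMultiplicity a with hm
  set col := {s ∈ T | s 0 = a}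
  -- Differentiating `m` times in the first variable keeps a nonzero top coefficient on the slice
  -- `s 0 = a`, while every point of the column stays a root of order at least `M - m`.
  set h := fixFirst a (hasseDeriv (Finsupp.single 0 m) f)
  have hlead : h.coeff P.natDegree ≠ 0 := by
    rw [coeff_fixFirst_hasseDeriv, hm, Polynomial.rootMultiplicity_eq_natTrailingDegree,
      ← Polynomial.taylor_apply]
    exact Polynomial.trailingCoeff_nonzero_iff_nonzero.mpr
      ((Polynomial.taylor_eq_zero _ _).not.mpr (Polynomial.leadingCoeff_ne_zero.mpr hf))
  have h0 : h ≠ 0 := fun h0 => hlead (by rw [h0, Polynomial.coeff_zero])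
  have hdeg : h.natDegree ≤ P.natDegree :=
    Polynomial.natDegree_le_iff_coeff_eq_zero.mpr fun j hj => by
      rw [coeff_fixFirst_hasseDeriv, Polynomial.coeff_eq_zero_of_natDegree_lt hj, map_zero,
        Polynomial.coeff_zero]
  have hmult (s) (hs : s ∈ col) : M - m ≤ h.rootMultiplicity (s 1) := by
    obtain ⟨hsT, rfl⟩ := Finset.mem_filter.mp hs
    rw [Polynomial.rootMultiplicity_eq_natTrailingDegree, ← Polynomial.taylor_apply]
    refine Polynomial.le_natTrailingDegree ((Polynomial.taylor_eq_zero _ _).not.mpr h0)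
      fun i hi => ?_
    have hi' : (Finsupp.single 0 m + Finsupp.single 1 i : Fin 2 →₀ ℕ).degree < M := by
      simp only [map_add, Finsupp.degree_single]
      omega
    rw [coeff_taylor_fixFirst, hasseDeriv_hasseDeriv, map_nsmul, hT s hsT _ hi', smul_zero]
  have hinj : Set.InjOn (fun s : Fin 2 → F => s 1) col := fun s hs s' hs' h1 => by
    have h0 : s 0 = s' 0 := (Finset.mem_filter.mp hs).2.trans (Finset.mem_filter.mp hs').2.symm
    funext i
    fin_cases i
    exacts [h0, h1]
  have hcard : col.card ≤ Fintype.card F :=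
    (Finset.card_le_card_of_injOn _ (fun _ _ => Finset.mem_coe.mpr (Finset.mem_univ _)) hinj)
  have hsum : (M - m) * col.card ≤ P.natDegree :=
    calc (M - m) * col.card = ∑ _s ∈ col, (M - m) := by
          rw [Finset.sum_const, smul_eq_mul, mul_comm]
      _ ≤ ∑ s ∈ col, h.rootMultiplicity (s 1) := Finset.sum_le_sum hmult
      _ = ∑ b ∈ col.image (fun s => s 1), h.rootMultiplicity b :=
          (Finset.sum_image (f := h.rootMultiplicity) hinj).symm
      _ ≤ P.natDegree := (h.sum_rootMultiplicity_le_natDegree_s15 _).trans hdeg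
  calc M * col.card ≤ (M - m) * col.card + m * col.card := by
        rw [← add_mul]; exact Nat.mul_le_mul_right _ (by omega)
    _ ≤ P.natDegree + m * Fintype.card F := add_le_add hsum (Nat.mul_le_mul_left _ hcard)
    _ = Fintype.card F * m + P.natDegree := by ring

theorem mul_card_le_totalDegree_mul_card {f : MvPolynomial (Fin 2) F} (hf : f ≠ 0) {M : ℕ}
    {T : Finset (Fin 2 → F)} (hT : ∀ s ∈ T, vanishesTo f s M) :
    M * T.card ≤ f.totalDegree * Fintype.card F := by
  set P := toPolyPoly f
  have hP : P ≠ 0 := toPolyPoly_ne_zero hf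
  have hdeg : P.leadingCoeff.natDegree + P.natDegree ≤ f.totalDegree := by
    have hc : coeff (Finsupp.single 0 P.leadingCoeff.natDegree + Finsupp.single 1 P.natDegree) f
        ≠ 0 := by
      rw [← coeff_coeff_toPolyPoly, ← Polynomial.leadingCoeff]
      exact Polynomial.leadingCoeff_ne_zero.mpr (Polynomial.leadingCoeff_ne_zero.mpr hP)
    have h := le_totalDegree (mem_support_iff.mpr hc)
    change Finsupp.degree _ ≤ _ at h
    simpa using h
  calc M * T.card = ∑ a : F, M * {s ∈ T | s 0 = a}.card := by
        rw [Finset.card_eq_sum_card_fiberwise fun s _ => Finset.mem_univ (s 0), Finset.mul_sum]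
    _ ≤ ∑ a : F, (Fintype.card F * P.leadingCoeff.rootMultiplicity a + P.natDegree) :=
        Finset.sum_le_sum fun a _ => mul_card_column_le hP hT a
    _ = Fintype.card F * (∑ a : F, P.leadingCoeff.rootMultiplicity a + P.natDegree) := by
        rw [Finset.sum_add_distrib, Finset.sum_const, Finset.card_univ, smul_eq_mul,
          ← Finset.mul_sum]
        ring
    _ ≤ Fintype.card F * f.totalDegree := Nat.mul_le_mul_left _
        ((Nat.add_le_add_right (P.leadingCoeff.sum_rootMultiplicity_le_natDegree_s15 _) _).trans hdeg)
    _ = f.totalDegree * Fintype.card F := mul_comm _ _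

end SchwartzZippel

lemma Set.ncard_le_card_filter {α β : Type*} [Fintype α] {g : α → β} {K S : Set β}
    [DecidablePred fun s => g s ∈ K] (hS : S ⊆ K ∩ Set.range g) :
    S.ncard ≤ (Finset.univ.filter fun s => g s ∈ K).card := by
  calc S.ncard ≤ (g '' (Finset.univ.filter fun s => g s ∈ K : Finset α)).ncard := by
        refine Set.ncard_le_ncard (fun x hx => ?_) (Set.toFinite _)
        obtain ⟨hxK, s, rfl⟩ := hS hx
        exact ⟨s, by simpa using hxK, rfl⟩
    _ ≤ _ := (Set.ncard_image_le (Finset.finite_toSet _)).trans_eq (Set.ncard_coe_finset _)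

lemma totalDegree_C_add_C_mul_X_add_C_mul_X_le {R : Type*} [CommRing R] (c u v : R) :
    (C c + C u * X 0 + C v * X 1 : MvPolynomial (Fin 2) R).totalDegree ≤ 1 := by
  refine (totalDegree_add _ _).trans (max_le ((totalDegree_add _ _).trans (max_le ?_ ?_)) ?_)
  · simp
  all_goals rw [C_mul_X_eq_monomial]; exact (totalDegree_monomial_le _ _).trans (by simp)

lemma sq_mul_mul_sub_one_sub_lt {q t ℓ w : ℕ} (hq : 0 < q) (hw : w < t * ℓ) :
    q ^ 2 * t * ℓ - 1 - w < ((q ^ 2 + t - 1) * ℓ - w) * t := by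
  have ht : 1 ≤ t := Nat.pos_of_ne_zero (by rintro rfl; simp at hw)
  have hw' : w < (q ^ 2 + t - 1) * ℓ :=
    hw.trans_le (Nat.mul_le_mul_right _ (by have := Nat.one_le_pow 2 q hq; omega))
  -- the slack is `(t - 1) * (t * ℓ - w) ≥ 0`
  have key : q ^ 2 * t * ℓ ≤ ((q ^ 2 + t - 1) * ℓ - w) * t + w := by
    zify [hw'.le, (by omega : 1 ≤ q ^ 2 + t)]
    have h1 : (1 : ℤ) ≤ t := by exact_mod_cast ht
    have h2 : (w : ℤ) ≤ t * ℓ := by exact_mod_cast hw.le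
    nlinarith [mul_nonneg (sub_nonneg.mpr h1) (sub_nonneg.mpr h2)]
  have : 0 < ((q ^ 2 + t - 1) * ℓ - w) * t := Nat.mul_pos (by omega) ht
  omega

theorem restriction_vanishes_general {F : Type*} [Field F] [Fintype F] {n : ℕ}
    (t ℓ m d : ℕ)
    (hm : m = (Fintype.card F ^ 2 + t - 1) * ℓ)
    (hd : d = Fintype.card F ^ 2 * t * ℓ - 1)
    (Q : MvPolynomial (Fin n) F) (hdeg : Q.totalDegree ≤ d)
    (K : Set (Fin n → F)) (hvan : ∀ x ∈ K, vanishesTo Q x m)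
    (c u v : Fin n → F)
    (hrich : Fintype.card F * t ≤
      {x ∈ K | ∃ s₁ s₂ : F, x = fun i => c i + s₁ * u i + s₂ * v i}.ncard) :
    ∀ j : Fin n →₀ ℕ, (j.sum fun _ e => e) < t * ℓ →
      MvPolynomial.aeval
        (fun i => MvPolynomial.C (c i) + MvPolynomial.C (u i) * MvPolynomial.X 0 +
          MvPolynomial.C (v i) * MvPolynomial.X (1 : Fin 2))
        (hasseDeriv j Q) = 0 := by
  classical
  intro j hj
  set A : Fin n → MvPolynomial (Fin 2) F := fun i => C (c i) + C (u i) * X 0 + C (v i) * X 1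
  set point : (Fin 2 → F) → Fin n → F := fun s i => eval s (A i)
  let T : Finset (Fin 2 → F) := {s | point s ∈ K}
  have hT : Fintype.card F * t ≤ T.card := by
    refine hrich.trans (Set.ncard_le_card_filter (g := point) ?_)
    rintro x ⟨hxK, s₁, s₂, rfl⟩
    exact ⟨hxK, ![s₁, s₂], funext fun i => by simp [point, A, mul_comm]⟩
  by_contra hR
  have hbound := mul_card_le_totalDegree_mul_card hR (T := T)
    fun s hs => ((hvan _ (Finset.mem_filter.mp hs).2).hasseDeriv j).aeval
  have hdegR : (aeval A (hasseDeriv j Q)).totalDegree ≤ d - j.degree :=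
    (totalDegree_aeval_le (fun i => totalDegree_C_add_C_mul_X_add_C_mul_X_le _ _ _) _).trans
      ((totalDegree_hasseDeriv_le j Q).trans (Nat.sub_le_sub_right hdeg j.degree))
  have hcancel : (m - j.degree) * t ≤ d - j.degree := by
    refine Nat.le_of_mul_le_mul_right ?_ (Fintype.card_pos (α := F))
    calc (m - j.degree) * t * Fintype.card F ≤ (m - j.degree) * T.card := by
          rw [mul_assoc, mul_comm t]; exact Nat.mul_le_mul_left _ hT
      _ ≤ _ := hbound
      _ ≤ (d - j.degree) * Fintype.card F := Nat.mul_le_mul_right _ hdegR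
  subst hm hd
  exact (sq_mul_mul_sub_one_sub_lt Fintype.card_pos hj).not_ge hcancel

/-- with `m = (q²+t−1)ℓ`, `d = q²tℓ − 1`, `t ≤ q`, if `Q` has degree at most `d`
and vanishes with multiplicity at least `m` on `K`, and the affine 2-flat
`{c + s₁u + s₂v}` contains at least `qt` points of `K`, then every substituted Hasse
derivative `Q^{(j)}(c + u t₁ + v t₂)` with `wt(j) < tℓ` is identically zero in `F_q[t₁,t₂]`. -/
theorem restriction_vanishes {F : Type*} [Field F] [Fintype F] {n : ℕ}
    (t ℓ m d : ℕ) (ht : t ≤ Fintype.card F)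
    (hm : m = (Fintype.card F ^ 2 + t - 1) * ℓ)
    (hd : d = Fintype.card F ^ 2 * t * ℓ - 1)
    (Q : MvPolynomial (Fin n) F) (hdeg : Q.totalDegree ≤ d)
    (K : Set (Fin n → F)) (hvan : ∀ x ∈ K, vanishesTo Q x m)
    (c u v : Fin n → F)
    (hrich : Fintype.card F * t ≤
      {x ∈ K | ∃ s₁ s₂ : F, x = fun i => c i + s₁ * u i + s₂ * v i}.ncard) :
    ∀ j : Fin n →₀ ℕ, (j.sum fun _ e => e) < t * ℓ →
      MvPolynomial.aeval
        (fun i => MvPolynomial.C (c i) + MvPolynomial.C (u i) * MvPolynomial.X 0 +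
          MvPolynomial.C (v i) * MvPolynomial.X (1 : Fin 2))
        (hasseDeriv j Q) = 0 :=
  restriction_vanishes_general t ℓ m d hm hd Q hdeg K hvan c u v hrich
end
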